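/- Let u : ℝ² → ℝ, let φ : ℝ² → ℝ be a smooth nowhere-vanishing solution of the heat conduction equation with potential u, let ψ : ℝ² → ℝ be a smooth solution of the dual heat conduction equation with potential u, and let Δ : ℝ² → ℝ be a smooth function satisfying ∂_{x₁}Δ = φ·ψ and ∂_{x₂}Δ = −(φ·∂_{x₁}ψ − ψ·∂_{x₁}φ). Then ψ′ := Δ/φ solves the dual heat conduction equation with the potential u′ = u − 2∂_{x₁}²(log |φ|). -/

import Mathlib

open MeasureTheory Filter Set

/-- Partial derivative with respect to the first coordinate on `ℝ²`. -/
noncomputable def D1 {E : Type*} [NormedAddCommGroup E] [NormedSpace ℝ E]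
    (f : ℝ × ℝ → E) (x : ℝ × ℝ) : E :=
  deriv (fun t => f (t, x.2)) x.1

/-- Partial derivative with respect to the second coordinate on `ℝ²`. -/
noncomputable def D2 {E : Type*} [NormedAddCommGroup E] [NormedSpace ℝ E]
    (f : ℝ × ℝ → E) (x : ℝ × ℝ) : E :=
  deriv (fun t => f (x.1, t)) x.2

lemma hasDerivAt_D1 {f : ℝ × ℝ → ℝ} (hf : Differentiable ℝ f) (x : ℝ × ℝ) :
    HasDerivAt (fun t => f (t, x.2)) (D1 f x) x.1 := by
  have hc : HasDerivAt (fun t : ℝ => (t, x.2)) ((1:ℝ), (0:ℝ)) x.1 :=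
    HasDerivAt.prodMk (hasDerivAt_id x.1) (hasDerivAt_const x.1 x.2)
  have h : DifferentiableAt ℝ (fun t => f (t, x.2)) x.1 :=
    ((hf (x.1, x.2)).hasFDerivAt.comp_hasDerivAt x.1 hc).differentiableAt
  exact h.hasDerivAt

lemma hasDerivAt_D2 {f : ℝ × ℝ → ℝ} (hf : Differentiable ℝ f) (x : ℝ × ℝ) :
    HasDerivAt (fun t => f (x.1, t)) (D2 f x) x.2 := by
  have hc : HasDerivAt (fun t : ℝ => (x.1, t)) ((0:ℝ), (1:ℝ)) x.2 :=
    HasDerivAt.prodMk (hasDerivAt_const x.2 x.1) (hasDerivAt_id x.2)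
  have h : DifferentiableAt ℝ (fun t => f (x.1, t)) x.2 :=
    ((hf (x.1, x.2)).hasFDerivAt.comp_hasDerivAt x.2 hc).differentiableAt
  exact h.hasDerivAt

lemma D1_eq_fderiv {f : ℝ × ℝ → ℝ} (hf : Differentiable ℝ f) (x : ℝ × ℝ) :
    D1 f x = fderiv ℝ f x ((1:ℝ), (0:ℝ)) := by
  have hc : HasDerivAt (fun t : ℝ => (t, x.2)) ((1:ℝ), (0:ℝ)) x.1 :=
    HasDerivAt.prodMk (hasDerivAt_id x.1) (hasDerivAt_const x.1 x.2)
  have h := (hf (x.1, x.2)).hasFDerivAt.comp_hasDerivAt x.1 hc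
  simpa [D1, Function.comp_def] using h.deriv

lemma contDiff_D1 {f : ℝ × ℝ → ℝ} (hf : ContDiff ℝ (⊤ : ℕ∞) f) : ContDiff ℝ (⊤ : ℕ∞) (D1 f) := by
  have h : D1 f = fun x => fderiv ℝ f x ((1:ℝ), (0:ℝ)) :=
    funext fun x => D1_eq_fderiv (hf.differentiable (by simp)) x
  rw [h]
  exact (hf.fderiv_right (by simp)).clm_apply contDiff_const

/-- If `φ` is a smooth nowhere-vanishing solution of the heat equation
with potential `u`, `ψ` a smooth solution of the dual equation, and `Δ` satisfies
`∂₁Δ = φψ`, `∂₂Δ = -(φ∂₁ψ - ψ∂₁φ)`, then `ψ' = Δ/φ` solves the dual heat equation with the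
potential `u' = u - 2∂₁² log |φ|`. -/
theorem dual_darboux_transform (u : ℝ × ℝ → ℝ) (φ ψ Δ : ℝ × ℝ → ℝ)
    (hφ : ContDiff ℝ (⊤ : ℕ∞) φ) (hφ0 : ∀ x, φ x ≠ 0)
    (hφeq : ∀ x : ℝ × ℝ, -D2 φ x + D1 (D1 φ) x - u x * φ x = 0)
    (hψ : ContDiff ℝ (⊤ : ℕ∞) ψ)
    (hψeq : ∀ x : ℝ × ℝ, D2 ψ x + D1 (D1 ψ) x - u x * ψ x = 0)
    (hΔ : ContDiff ℝ (⊤ : ℕ∞) Δ)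
    (hΔ1 : ∀ x : ℝ × ℝ, D1 Δ x = φ x * ψ x)
    (hΔ2 : ∀ x : ℝ × ℝ, D2 Δ x = -(φ x * D1 ψ x - ψ x * D1 φ x))
    (u' : ℝ × ℝ → ℝ)
    (hu' : ∀ x : ℝ × ℝ, u' x = u x - 2 * D1 (D1 (fun y => Real.log |φ y|)) x) :
    ∀ x : ℝ × ℝ,
      D2 (fun y => Δ y / φ y) x + D1 (D1 (fun y => Δ y / φ y)) x -
        u' x * (Δ x / φ x) = 0 := by
  have dφ : Differentiable ℝ φ := hφ.differentiable (by simp)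
  have dψ : Differentiable ℝ ψ := hψ.differentiable (by simp)
  have dΔ : Differentiable ℝ Δ := hΔ.differentiable (by simp)
  have dφ1 : Differentiable ℝ (D1 φ) := (contDiff_D1 hφ).differentiable (by simp)
  -- first derivative of the quotient
  have hD1q : ∀ y : ℝ × ℝ, D1 (fun z => Δ z / φ z) y =
      (D1 Δ y * φ y - Δ y * D1 φ y) / φ y ^ 2 := fun y =>
    ((hasDerivAt_D1 dΔ y).div (hasDerivAt_D1 dφ y) (hφ0 _)).deriv
  -- simplified form of the first derivative
  have hD1q' : ∀ y : ℝ × ℝ, D1 (fun z => Δ z / φ z) y =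
      ψ y - Δ y * D1 φ y / φ y ^ 2 := by
    intro y
    rw [hD1q y, hΔ1 y]
    have := hφ0 y
    field_simp
  -- first derivative of log |φ|
  have hlog1 : ∀ y : ℝ × ℝ, D1 (fun z => Real.log |φ z|) y = D1 φ y / φ y := by
    intro y
    have key : HasDerivAt (fun t => Real.log (φ (t, y.2))) (D1 φ y / φ y) y.1 :=
      (hasDerivAt_D1 dφ y).log (hφ0 _)
    show deriv (fun t => Real.log |φ (t, y.2)|) y.1 = _
    rw [show (fun t => Real.log |φ (t, y.2)|) = fun t => Real.log (φ (t, y.2)) from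
      funext fun t => Real.log_abs _]
    exact key.deriv
  intro x
  -- second derivative of log |φ|
  have hlog2 : D1 (D1 (fun z => Real.log |φ z|)) x =
      (D1 (D1 φ) x * φ x - D1 φ x * D1 φ x) / φ x ^ 2 := by
    have key : HasDerivAt (fun t => D1 φ (t, x.2) / φ (t, x.2))
        ((D1 (D1 φ) x * φ x - D1 φ x * D1 φ x) / φ x ^ 2) x.1 :=
      (hasDerivAt_D1 dφ1 x).div (hasDerivAt_D1 dφ x) (hφ0 _)
    show deriv (fun t => D1 (fun z => Real.log |φ z|) (t, x.2)) x.1 = _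
    rw [show (fun t => D1 (fun z => Real.log |φ z|) (t, x.2)) =
        fun t => D1 φ (t, x.2) / φ (t, x.2) from funext fun t => hlog1 (t, x.2)]
    exact key.deriv
  -- second x₁-derivative of the quotient
  have hD1D1q : D1 (D1 (fun z => Δ z / φ z)) x =
      D1 ψ x - ((D1 Δ x * D1 φ x + Δ x * D1 (D1 φ) x) * φ x ^ 2 -
        Δ x * D1 φ x * (↑(2:ℕ) * φ x ^ 1 * D1 φ x)) / (φ x ^ 2) ^ 2 := by
    have key : HasDerivAt
        (fun t => ψ (t, x.2) - Δ (t, x.2) * D1 φ (t, x.2) / φ (t, x.2) ^ 2)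
        (D1 ψ x - ((D1 Δ x * D1 φ x + Δ x * D1 (D1 φ) x) * φ x ^ 2 -
          Δ x * D1 φ x * (↑(2:ℕ) * φ x ^ 1 * D1 φ x)) / (φ x ^ 2) ^ 2) x.1 :=
      (hasDerivAt_D1 dψ x).sub
        (((hasDerivAt_D1 dΔ x).mul (hasDerivAt_D1 dφ1 x)).div
          ((hasDerivAt_D1 dφ x).pow 2) (pow_ne_zero 2 (hφ0 _)))
    show deriv (fun t => D1 (fun z => Δ z / φ z) (t, x.2)) x.1 = _
    rw [show (fun t => D1 (fun z => Δ z / φ z) (t, x.2)) =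
        fun t => ψ (t, x.2) - Δ (t, x.2) * D1 φ (t, x.2) / φ (t, x.2) ^ 2 from
      funext fun t => hD1q' (t, x.2)]
    exact key.deriv
  -- x₂-derivative of the quotient
  have hD2q : D2 (fun z => Δ z / φ z) x =
      (D2 Δ x * φ x - Δ x * D2 φ x) / φ x ^ 2 :=
    ((hasDerivAt_D2 dΔ x).div (hasDerivAt_D2 dφ x) (hφ0 _)).deriv
  -- the heat equation for φ gives D2 φ
  have hφ2 : D2 φ x = D1 (D1 φ) x - u x * φ x := by linarith [hφeq x]
  rw [hD2q, hD1D1q, hu' x, hlog2, hΔ1 x, hΔ2 x, hφ2]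
  have ha := hφ0 x
  field_simp
  ring
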